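/- Let n ≥ 1 and let Δ_1, …, Δ_n be strictly positive reals, ρ_1, …, ρ_n ∈ [0,1), and let N, L be reals with Σ_{i=1}^n ρ_i < L < N. Define, for θ ≥ 0, δ(θ) = (Σ_{i=1}^n (1 − ρ_i)·Δ_i/(Δ_i + θ)) / (Σ_{i=1}^n (1 − ρ_i)/(Δ_i + θ)). Then there exists θ ≥ 0 such that θ·(L − Σ_{i=1}^n ρ_i) = (N − L)·δ(θ). -/

import Mathlib

/-!
`δ(θ)` is the centre of mass of the overheads `Δ i` for the positive weights
`(1 - ρ i) / (Δ i + θ)`, so it is continuous in `θ ≥ 0` and stays between `0` and `max Δ`.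
Hence `θ (L - ∑ ρ) - (N - L) δ(θ)` is `≤ 0` at `θ = 0` and `≥ 0` at
`θ = (N - L) max Δ / (L - ∑ ρ)`, and the intermediate value theorem gives a root.
-/

open Finset Set

theorem exists_nonneg_mul_eq_mul_of_mem_Icc {f : ℝ → ℝ} {a b c : ℝ}
    (hf : ContinuousOn f (Ici 0)) (hfb : ∀ θ, 0 ≤ θ → f θ ∈ Icc 0 b) (ha : 0 ≤ a) (hc : 0 < c) :
    ∃ θ, 0 ≤ θ ∧ θ * c = a * f θ := by
  set g : ℝ → ℝ := fun θ => θ * c - a * f θ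
  have hb : 0 ≤ b := (hfb 0 le_rfl).1.trans (hfb 0 le_rfl).2
  have hM : 0 ≤ a * b / c := div_nonneg (mul_nonneg ha hb) hc.le
  have hg : ContinuousOn g (Icc 0 (a * b / c)) :=
    ((continuousOn_id.mul continuousOn_const).sub (continuousOn_const.mul hf)).mono
      Icc_subset_Ici_self
  have hg0 : g 0 ≤ 0 := by
    simpa [g] using mul_nonneg ha (hfb 0 le_rfl).1
  have hgM : 0 ≤ g (a * b / c) := by
    have : a * f (a * b / c) ≤ a * b := mul_le_mul_of_nonneg_left (hfb _ hM).2 ha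
    simp only [g, div_mul_cancel₀ _ hc.ne']
    linarith
  obtain ⟨θ, hθ, hgθ⟩ := intermediate_value_Icc hM hg ⟨hg0, hgM⟩
  exact ⟨θ, hθ.1, sub_eq_zero.mp hgθ⟩

section MeanOverhead

variable {ι : Type*} [Fintype ι] (Δ ρ : ι → ℝ)

/-- The paper's `δ(θ)`. -/
noncomputable def meanOverhead (θ : ℝ) : ℝ :=
  (∑ i, (1 - ρ i) * Δ i / (Δ i + θ)) / ∑ i, (1 - ρ i) / (Δ i + θ)

theorem meanOverhead_eq_centerMass (θ : ℝ) :
    meanOverhead Δ ρ θ = univ.centerMass (fun i => (1 - ρ i) / (Δ i + θ)) Δ := by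
  simp only [meanOverhead, centerMass, smul_eq_mul, div_eq_inv_mul, mul_assoc]

variable {Δ ρ} (hΔ : ∀ i, 0 < Δ i) (hρ : ∀ i, ρ i < 1)
include hΔ hρ

theorem meanOverhead_denom_pos [Nonempty ι] {θ : ℝ} (hθ : 0 ≤ θ) :
    0 < ∑ i, (1 - ρ i) / (Δ i + θ) :=
  sum_pos (fun i _ => div_pos (sub_pos.mpr (hρ i)) (by linarith [hΔ i])) univ_nonempty

theorem meanOverhead_mem_Icc [Nonempty ι] {θ : ℝ} (hθ : 0 ≤ θ) :
    meanOverhead Δ ρ θ ∈ Icc 0 (univ.sup' univ_nonempty Δ) := by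
  have hw : ∀ i ∈ Finset.univ, 0 ≤ (1 - ρ i) / (Δ i + θ) :=
    fun i _ => div_nonneg (sub_nonneg.mpr (hρ i).le) (by linarith [hΔ i])
  have hsum := meanOverhead_denom_pos hΔ hρ hθ
  rw [meanOverhead_eq_centerMass]
  refine ⟨?_, centerMass_le_sup hw hsum⟩
  calc (0 : ℝ) ≤ univ.inf' univ_nonempty Δ := (lt_inf'_iff _).mpr (fun i _ => hΔ i) |>.le
    _ ≤ _ := inf_le_centerMass hw hsum

theorem continuousOn_meanOverhead [Nonempty ι] : ContinuousOn (meanOverhead Δ ρ) (Ici 0) := by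
  have hden : ∀ i, ∀ θ ∈ Ici (0 : ℝ), Δ i + θ ≠ 0 := fun i θ hθ => by
    linarith [hΔ i, mem_Ici.mp hθ]
  refine ContinuousOn.div ?_ ?_ fun θ hθ => (meanOverhead_denom_pos hΔ hρ hθ).ne'
  all_goals exact continuousOn_finsetSum _ fun i _ =>
    continuousOn_const.div (continuousOn_const.add continuousOn_id) (hden i)

end MeanOverhead

/-- Existence of the mean vacation interval `θ` in the mean-field description of a WDM
PON with heterogeneous switch overheads: with `δ(θ)` the weighted average
`(∑ (1 − ρ i)·Δ i/(Δ i + θ)) / (∑ (1 − ρ i)/(Δ i + θ))`, there exists `θ ≥ 0` with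
`θ·(L − ∑ ρ i) = (N − L)·δ(θ)`. -/
theorem stmt_7 (n : ℕ) (hn : 1 ≤ n) (Δ ρ : Fin n → ℝ)
    (hΔ : ∀ i, 0 < Δ i) (hρ : ∀ i, ρ i ∈ Set.Ico (0 : ℝ) 1)
    (N L : ℝ) (hρL : ∑ i, ρ i < L) (hLN : L < N) :
    ∃ θ : ℝ, 0 ≤ θ ∧
      θ * (L - ∑ i, ρ i) =
        (N - L) * ((∑ i, (1 - ρ i) * Δ i / (Δ i + θ)) / (∑ i, (1 - ρ i) / (Δ i + θ))) := by
  have : Nonempty (Fin n) := Fin.pos_iff_nonempty.mp hn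
  have hρ₁ : ∀ i, ρ i < 1 := fun i => (hρ i).2
  exact exists_nonneg_mul_eq_mul_of_mem_Icc (continuousOn_meanOverhead hΔ hρ₁)
    (fun θ hθ => meanOverhead_mem_Icc hΔ hρ₁ hθ) (sub_nonneg.mpr hLN.le) (sub_pos.mpr hρL)
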